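/- arXiv:1308.3640 — 3 statements merged into one kernel-verified Lean document; each statement's English description precedes it below -/
import Mathlib

section
/- If the class of Banach spaces of density κ has a universal family {X_α : α < α*} under isomorphic embeddings with 1 ≤ α* < κ⁺, then there is a single Banach space of density κ that is universal for this class under isomorphic embeddings. Hence the universality number of Banach spaces of density κ is either 1 or at least κ⁺. -/
/-- A Banach space of density character `κ`: the smallest cardinality of a dense
subset equals `κ`. -/
structure BanachOfDensity (κ : Cardinal.{0}) : Type 1 where
  carrier : Type
  [norm : NormedAddCommGroup carrier]
  [sp : NormedSpace ℝ carrier]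
  [compl : CompleteSpace carrier]
  dens : sInf {c : Cardinal.{0} | ∃ s : Set carrier, Dense s ∧ Cardinal.mk s = c} = κ

attribute [instance] BanachOfDensity.norm BanachOfDensity.sp BanachOfDensity.compl

/-- `X` isomorphically embeds into `Y`: there is a linear map with a constant
`D > 0` with `‖x‖/D ≤ ‖T x‖ ≤ D‖x‖` for all `x`. -/
def IsoEmbeds {κ : Cardinal.{0}} (X Y : BanachOfDensity κ) : Prop :=
  ∃ T : X.carrier →ₗ[ℝ] Y.carrier, ∃ D : ℝ, 0 < D ∧
    ∀ x : X.carrier, ‖x‖ / D ≤ ‖T x‖ ∧ ‖T x‖ ≤ D * ‖x‖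

/-! The universal space is the `ℓ¹`-sum of the family: every `X_i` sits in it isometrically as a
coordinate, and finite sums of coordinate vectors taken from dense subsets of size `κ` of the `X_i`
form a dense subset of size at most `|ι| · κ ≤ κ`. -/

open Cardinal

universe u

section DensityChar

variable {X Y : Type u} [TopologicalSpace X] [TopologicalSpace Y]

noncomputable def densityChar (X : Type u) [TopologicalSpace X] : Cardinal.{u} :=
  sInf {c | ∃ s : Set X, Dense s ∧ #s = c}

theorem densityChar_le_mk {s : Set X} (hs : Dense s) : densityChar X ≤ #s :=
  csInf_le' ⟨s, hs, rfl⟩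

variable (X) in
theorem exists_dense_mk_eq_densityChar : ∃ s : Set X, Dense s ∧ #s = densityChar X :=
  csInf_mem (s := {c | ∃ s : Set X, Dense s ∧ #s = c}) ⟨_, Set.univ, dense_univ, rfl⟩

theorem densityChar_le_of_denseRange {f : X → Y} (hf : Continuous f) (hd : DenseRange f) :
    densityChar Y ≤ densityChar X := by
  obtain ⟨s, hs, hs_card⟩ := exists_dense_mk_eq_densityChar X
  calc densityChar Y ≤ #(f '' s) := densityChar_le_mk (hd.dense_image hf hs)
    _ ≤ densityChar X := hs_card ▸ mk_image_le

end DensityChar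

theorem AddSubmonoid.mk_closure_le_max {M : Type u} [AddMonoid M] (s : Set M) :
    #(closure s) ≤ max ℵ₀ #s := by
  rw [closure_eq_mrange]
  exact mk_range_le.trans (mk_list_le_max s)

namespace lp

variable {α : Type u} {E : α → Type u} [∀ i, NormedAddCommGroup (E i)]
  {p : ENNReal} [Fact (1 ≤ p)] [DecidableEq α]

theorem dense_closure_iUnion_image_single (hp : p ≠ ⊤) {D : ∀ i, Set (E i)}
    (hD : ∀ i, Dense (D i)) :
    Dense (AddSubmonoid.closure (⋃ i, lp.single p i '' D i) : Set (lp E p)) := by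
  set S := AddSubmonoid.closure (⋃ i, lp.single p i '' D i)
  have h_single : ∀ i x, lp.single p i x ∈ S.topologicalClosure := fun i x =>
    closure_mono ((Set.subset_iUnion_of_subset i subset_rfl).trans AddSubmonoid.subset_closure)
      (mem_closure_image (isometry_single i).continuous.continuousAt (hD i x))
  refine fun f => S.coe_topologicalClosure ▸ S.isClosed_topologicalClosure.mem_of_tendsto
    (lp.hasSum_single hp f) (Filter.Eventually.of_forall fun F => ?_)
  exact sum_mem fun i _ => h_single i (f i)

theorem densityChar_le {κ : Cardinal.{u}} (hp : p ≠ ⊤) (hκ : ℵ₀ ≤ κ) (hα : #α ≤ κ)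
    (hE : ∀ i, densityChar (E i) ≤ κ) : densityChar (lp E p) ≤ κ := by
  choose D hD hD_card using fun i => exists_dense_mk_eq_densityChar (E i)
  have h_union : #(⋃ i, lp.single p i '' D i) ≤ κ :=
    calc #(⋃ i, lp.single p i '' D i)
        ≤ sum fun i => #(lp.single p i '' D i) := mk_iUnion_le_sum_mk
      _ ≤ sum fun _ : α => κ := sum_le_sum _ _ fun i => mk_image_le.trans (hD_card i ▸ hE i)
      _ = #α * κ := sum_const' α κ
      _ ≤ κ * κ := mul_le_mul_left hα κ
      _ = κ := mul_eq_self hκ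
  calc densityChar (lp E p)
      ≤ #(AddSubmonoid.closure (⋃ i, lp.single p i '' D i)) :=
        densityChar_le_mk (dense_closure_iUnion_image_single hp hD)
    _ ≤ max ℵ₀ #(⋃ i, lp.single p i '' D i) := AddSubmonoid.mk_closure_le_max _
    _ ≤ κ := max_le hκ h_union

theorem densityChar_le_densityChar_lp (i : α) : densityChar (E i) ≤ densityChar (lp E p) :=
  densityChar_le_of_denseRange (lipschitzWith_one_eval p i).continuous
    (Function.Surjective.denseRange (f := fun f : lp E p => f i) fun y =>
      ⟨lp.single p i y, lp.single_apply_self p i y⟩)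

variable [∀ i, NormedSpace ℝ (E i)]

noncomputable def singleₗᵢ (i : α) : E i →ₗᵢ[ℝ] lp E p where
  toLinearMap := lp.lsingle p i
  norm_map' := lp.norm_single (zero_lt_one.trans_le Fact.out) i

end lp

theorem IsoEmbeds.trans {κ : Cardinal.{0}} {X Y Z : BanachOfDensity κ} (hXY : IsoEmbeds X Y)
    (hYZ : IsoEmbeds Y Z) : IsoEmbeds X Z := by
  obtain ⟨T, C, hC, hT⟩ := hXY
  obtain ⟨S, D, hD, hS⟩ := hYZ
  refine ⟨S ∘ₗ T, C * D, mul_pos hC hD, fun x => ⟨?_, ?_⟩⟩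
  · calc ‖x‖ / (C * D) = ‖x‖ / C / D := (div_div _ _ _).symm
      _ ≤ ‖T x‖ / D := div_le_div_of_nonneg_right (hT x).1 hD.le
      _ ≤ ‖S (T x)‖ := (hS (T x)).1
  · calc ‖S (T x)‖ ≤ D * ‖T x‖ := (hS (T x)).2
      _ ≤ D * (C * ‖x‖) := mul_le_mul_of_nonneg_left (hT x).2 hD.le
      _ = C * D * ‖x‖ := by ring

theorem isoEmbeds_of_linearIsometry {κ : Cardinal.{0}} {X Y : BanachOfDensity κ}
    (T : X.carrier →ₗᵢ[ℝ] Y.carrier) : IsoEmbeds X Y :=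
  ⟨T.toLinearMap, 1, one_pos, fun x => by simp⟩

/-- If the class of Banach spaces of density `κ` has a universal family of size
`< κ⁺` (indexed by a nonempty set of cardinality `≤ κ`) under isomorphic
embeddings, then there is a single universal Banach space of density `κ`.
Hence the universality number is either `1` or at least `κ⁺`. -/
theorem stmt0 (κ : Cardinal.{0}) (hκ : Cardinal.aleph0 ≤ κ)
    (ι : Type) (hne : Nonempty ι) (hι : Cardinal.mk ι ≤ κ)
    (Xs : ι → BanachOfDensity κ)
    (huniv : ∀ X : BanachOfDensity κ, ∃ i : ι, IsoEmbeds X (Xs i)) :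
    ∃ Y : BanachOfDensity κ, ∀ X : BanachOfDensity κ, IsoEmbeds X Y := by
  classical
  obtain ⟨i₀⟩ := hne
  have h_dens : densityChar (lp (fun i => (Xs i).carrier) 1) = κ :=
    le_antisymm (lp.densityChar_le ENNReal.one_ne_top hκ hι fun i => (Xs i).dens.le)
      (((Xs i₀).dens : densityChar _ = κ).symm.trans_le (lp.densityChar_le_densityChar_lp i₀))
  refine ⟨⟨lp (fun i => (Xs i).carrier) 1, h_dens⟩, fun X => ?_⟩
  obtain ⟨i, hi⟩ := huniv X
  exact hi.trans <|
    isoEmbeds_of_linearIsometry (lp.singleₗᵢ (E := fun i => (Xs i).carrier) (p := 1) i)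
end

section
/- Let θ > ℵ₁ be a regular cardinal, λ > θ regular, and suppose there is a club guessing sequence ⟨C_δ : δ ∈ S^λ_θ⟩ where each C_δ has order type θ. Then there is a club guessing sequence ⟨D_δ : δ ∈ S^λ_θ⟩ such that, with ⟨α^δ_i : i < θ⟩ the increasing enumeration of D_δ, for all i < θ of uncountable cofinality the ordinal α^δ_i also has uncountable cofinality. -/
/-!
Take `D_δ` to be the closure in `δ` of `A_δ = {x ∈ C_δ | cf x ≠ ℵ₀}`. As `C_δ` is closed,
`D_δ ⊆ C_δ`, so `D` still guesses clubs and `D_δ` still has order type `θ`. The increasing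
enumeration of a club of `δ` is continuous; for `C_δ` its value at `k + ω₁`, which is below `θ` as
`θ > ℵ₁`, has cofinality `ℵ₁`, so `A_δ` is unbounded and `D_δ` is a club. If `e` enumerates `D_δ`,
then at a limit `i` continuity gives `cf (e i) = cf i`, while at `0` or a successor `e i` is not an
accumulation point of `D_δ ⊇ A_δ`, so it lies in `A_δ` itself.
-/

/-- `C` is a club (closed unbounded) subset of the ordinal `δ`. -/
def IsClubIn (C : Set Ordinal) (δ : Ordinal) : Prop :=
  (∀ x ∈ C, x < δ) ∧
  (∀ α < δ, ∃ x ∈ C, α ≤ x) ∧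
  (∀ α < δ, α ≠ 0 → (∀ β < α, ∃ x ∈ C, β < x ∧ x < α) → α ∈ C)

open Cardinal Ordinal Order Set Filter

theorem Ordinal.accPt_principal_iff {α : Ordinal} {s : Set Ordinal} :
    AccPt α (𝓟 s) ↔ α ≠ 0 ∧ ∀ β < α, ∃ x ∈ s, β < x ∧ x < α := by
  simp [SuccOrder.accPt_principal, isMin_iff_eq_bot, Set.Nonempty]

theorem StrictMono.isSuccLimit_of_accPt_range {α β : Type*} [LinearOrder α] [LinearOrder β]
    [TopologicalSpace β] [OrderTopology β] [SuccOrder β] [NoMaxOrder β] {e : α → β}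
    (he : StrictMono e) {i : α} (hi : AccPt (e i) (𝓟 (range e))) : IsSuccLimit i := by
  obtain ⟨hmin, hacc⟩ := SuccOrder.accPt_principal.1 hi
  refine ⟨fun hi => ?_, fun j hji => ?_⟩
  · obtain ⟨b, hb⟩ := not_isMin_iff.1 hmin
    obtain ⟨_, ⟨k, rfl⟩, -, hk⟩ := hacc b hb
    exact hi.not_lt (he.lt_iff_lt.1 hk)
  · obtain ⟨_, ⟨k, rfl⟩, hjk, hki⟩ := hacc (e j) (he hji.lt)
    exact hji.2 (he.lt_iff_lt.1 hjk) (he.lt_iff_lt.1 hki)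

theorem StrictMono.mem_of_mem_closure_of_not_isSuccLimit {α β : Type*} [LinearOrder α]
    [LinearOrder β] [TopologicalSpace β] [OrderTopology β] [SuccOrder β] [NoMaxOrder β]
    {e : α → β} (he : StrictMono e) {A : Set β} (hAe : A ⊆ range e) {i : α}
    (hi : e i ∈ closure A) (hlim : ¬IsSuccLimit i) : e i ∈ A := by
  rw [closure_eq_self_union_derivedSet] at hi
  exact hi.resolve_right fun h =>
    hlim (he.isSuccLimit_of_accPt_range (h.mono (principal_mono.2 hAe)))

theorem StrictMonoOn.apply_le_of_forall_mem_image {o : Ordinal} {c e : Ordinal → Ordinal}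
    (hc : StrictMonoOn c (Iio o)) (he : StrictMono e) (hec : ∀ j < o, e j ∈ c '' Iio o) :
    ∀ j < o, c j ≤ e j := by
  intro j
  induction j using WellFoundedLT.induction with
  | ind j IH =>
  intro hj
  obtain ⟨k, hk, hkj⟩ := hec j hj
  have hjk : j ≤ k := le_of_not_gt fun hkj' => (IH k hkj' hk).not_gt (hkj ▸ he hkj')
  exact hkj ▸ hc.monotoneOn hj hk hjk

theorem Ordinal.add_omega_one_lt_ord {c : Cardinal} (hc : ℵ₁ < c) {k : Ordinal} (hk : k < c.ord) :
    k + ω₁ < c.ord := by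
  rw [lt_ord, card_add, card_omega]
  exact add_lt_of_lt ((aleph0_le_aleph 1).trans hc.le) (lt_ord.1 hk) hc

theorem Ordinal.cof_add_omega_one (k : Ordinal) : (k + ω₁).cof = ℵ₁ := by
  rw [cof_add _ (omega_pos 1).ne', cof_omega_one]

theorem Ordinal.isSuccLimit_of_aleph_one_le_cof {δ : Ordinal} (hδ : ℵ₁ ≤ δ.cof) : IsSuccLimit δ :=
  one_lt_cof_iff.1 (one_lt_aleph0.trans_le ((aleph0_le_aleph 1).trans hδ))

theorem isClubIn_closure_inter_Iio {A : Set Ordinal} {δ : Ordinal} (hAδ : A ⊆ Iio δ)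
    (hA : ∀ α < δ, ∃ x ∈ A, α ≤ x) : IsClubIn (closure A ∩ Iio δ) δ := by
  refine ⟨fun x hx => hx.2, fun α hα => ?_, fun α hαδ hα0 hα => ⟨?_, hαδ⟩⟩
  · obtain ⟨x, hxA, hαx⟩ := hA α hα
    exact ⟨x, ⟨subset_closure hxA, hAδ hxA⟩, hαx⟩
  · have hacc : AccPt α (𝓟 (closure A)) :=
      (accPt_principal_iff.2 ⟨hα0, hα⟩).mono (principal_mono.2 inter_subset_left)
    exact isClosed_closure.closure_subset (mem_closure_iff_clusterPt.2 hacc.clusterPt)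

/-- Padding a subset `F` of `δ` by `Ici δ` makes it unbounded, so that `enumOrd` applies; below the
order type of `F`, `enumOrd (F ∪ Ici δ)` enumerates `F`. -/
theorem not_bddAbove_union_Ici (F : Set Ordinal) (δ : Ordinal) : ¬BddAbove (F ∪ Ici δ) :=
  fun h => not_bddAbove_Ici δ (h.mono subset_union_right)

namespace IsClubIn

variable {F : Set Ordinal} {δ : Ordinal}

theorem mem_of_accPt (hF : IsClubIn F δ) {α : Ordinal} (hαδ : α < δ) (hα : AccPt α (𝓟 F)) :
    α ∈ F :=
  hF.2.2 α hαδ (accPt_principal_iff.1 hα).1 (accPt_principal_iff.1 hα).2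

theorem closure_inter_Iio_subset (hF : IsClubIn F δ) {A : Set Ordinal} (hAF : A ⊆ F) :
    closure A ∩ Iio δ ⊆ F := by
  rintro x ⟨hxA, hxδ⟩
  rw [closure_eq_self_union_derivedSet] at hxA
  exact hxA.elim (fun h => hAF h) fun h => hF.mem_of_accPt hxδ (h.mono (principal_mono.2 hAF))

theorem isClosed_union_Ici (hF : IsClubIn F δ) : IsClosed (F ∪ Ici δ) := by
  refine (isClosed_iff_derivedSet_subset _).2 fun α hα => ?_
  obtain ⟨hα0, hacc⟩ := accPt_principal_iff.1 hα
  rcases lt_or_ge α δ with hαδ | hδα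
  · refine Or.inl (hF.2.2 α hαδ hα0 fun β hβ => ?_)
    obtain ⟨x, hxS, hβx, hxα⟩ := hacc β hβ
    exact ⟨x, hxS.resolve_right (not_le.2 (hxα.trans hαδ)), hβx, hxα⟩
  · exact Or.inr hδα

theorem isNormal_enumOrd_union_Ici (hF : IsClubIn F δ) : IsNormal (enumOrd (F ∪ Ici δ)) :=
  isNormal_enumOrd
    (fun _ ht hne hbdd =>
      hF.isClosed_union_Ici.closure_subset_iff.2 ht (csSup_mem_closure hne hbdd))
    (not_bddAbove_union_Ici F δ)

theorem enumOrd_union_Ici_lt (hF : IsClubIn F δ) (hδ : IsSuccLimit δ) {i : Ordinal}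
    (hi : i < δ.cof.ord) : enumOrd (F ∪ Ici δ) i < δ := by
  induction i using WellFoundedLT.induction with
  | ind i IH =>
  have hsup : ⨆ j : Iio i, enumOrd (F ∪ Ici δ) j < δ := by
    refine lift_iSup_lt_of_lt_cof ?_ fun j => IH j j.2 (j.2.trans hi)
    rwa [Cardinal.mk_Iio_ordinal, Cardinal.lift_lift, ← lift_cof, Cardinal.lift_lt, ← lt_ord]
  obtain ⟨x, hxF, hx⟩ := hF.2.1 _ (hδ.succ_lt hsup)
  refine (enumOrd_le_of_forall_lt (Or.inl hxF) fun j hj => ?_).trans_lt (hF.1 x hxF)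
  exact lt_succ_iff.2 (Ordinal.le_iSup _ (⟨j, hj⟩ : Iio i)) |>.trans_le hx

theorem exists_isNormal_image_eq (hF : IsClubIn F δ) (hδ : IsSuccLimit δ) {c : Ordinal → Ordinal}
    (hc : StrictMonoOn c (Iio δ.cof.ord)) (hFc : F ⊆ c '' Iio δ.cof.ord) :
    ∃ e, IsNormal e ∧ e '' Iio δ.cof.ord = F := by
  set e := enumOrd (F ∪ Ici δ)
  have he : IsNormal e := hF.isNormal_enumOrd_union_Ici
  have hmem : ∀ i < δ.cof.ord, e i ∈ F := fun i hi =>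
    (enumOrd_mem (not_bddAbove_union_Ici F δ) i).resolve_right
      (not_le.2 (hF.enumOrd_union_Ici_lt hδ hi))
  have hce := hc.apply_le_of_forall_mem_image he.strictMono fun j hj => hFc (hmem j hj)
  refine ⟨e, he, (image_subset_iff.2 hmem).antisymm fun x hxF => ?_⟩
  obtain ⟨y, hyF, hxy⟩ := hF.2.1 _ (hδ.succ_lt (hF.1 x hxF))
  obtain ⟨j, hj, rfl⟩ := hFc hyF
  obtain ⟨k, rfl⟩ := enumOrd_surjective (not_bddAbove_union_Ici F δ) (Or.inl hxF)
  have hkj : k < j := he.strictMono.lt_iff_lt.1 ((lt_succ _).trans_le (hxy.trans (hce j hj)))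
  exact ⟨k, hkj.trans hj, rfl⟩

theorem exists_mem_cof_eq_aleph_one (hF : IsClubIn F δ) (hδ : ℵ₁ < δ.cof)
    {c : Ordinal → Ordinal} (hc : StrictMonoOn c (Iio δ.cof.ord)) (hFc : F ⊆ c '' Iio δ.cof.ord)
    {α : Ordinal} (hα : α < δ) : ∃ x ∈ F, α ≤ x ∧ x.cof = ℵ₁ := by
  obtain ⟨e, he, heF⟩ :=
    hF.exists_isNormal_image_eq (isSuccLimit_of_aleph_one_le_cof hδ.le) hc hFc
  obtain ⟨x, hxF, hαx⟩ := hF.2.1 α hα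
  rw [← heF] at hxF
  obtain ⟨k, hk, rfl⟩ := hxF
  refine ⟨e (k + ω₁), heF ▸ mem_image_of_mem e (add_omega_one_lt_ord hδ hk),
    hαx.trans (he.strictMono.monotone le_self_add), ?_⟩
  rw [cof_map_of_isNormal he (isSuccLimit_of_aleph_one_le_cof (cof_add_omega_one k).ge),
    cof_add_omega_one]

end IsClubIn

def cofNeAleph0Closure (C : Set Ordinal) (δ : Ordinal) : Set Ordinal :=
  closure {x ∈ C | x.cof ≠ ℵ₀} ∩ Iio δ

namespace IsClubIn

variable {C : Set Ordinal} {δ : Ordinal}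

theorem cofNeAleph0Closure_subset (hC : IsClubIn C δ) : cofNeAleph0Closure C δ ⊆ C :=
  hC.closure_inter_Iio_subset (sep_subset _ _)

variable {c : Ordinal → Ordinal}

theorem isClubIn_cofNeAleph0Closure (hC : IsClubIn C δ) (hδ : ℵ₁ < δ.cof)
    (hc : StrictMonoOn c (Iio δ.cof.ord)) (hCc : C ⊆ c '' Iio δ.cof.ord) :
    IsClubIn (cofNeAleph0Closure C δ) δ :=
  isClubIn_closure_inter_Iio (fun x hx => hC.1 x hx.1) fun _ hα =>
    let ⟨x, hxC, hαx, hx⟩ := hC.exists_mem_cof_eq_aleph_one hδ hc hCc hα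
    ⟨x, ⟨hxC, hx ▸ aleph0_lt_aleph_one.ne'⟩, hαx⟩

theorem exists_enum_cofNeAleph0Closure (hC : IsClubIn C δ) (hδ : ℵ₁ < δ.cof)
    (hc : StrictMonoOn c (Iio δ.cof.ord)) (hCc : C ⊆ c '' Iio δ.cof.ord) :
    ∃ e : Ordinal → Ordinal, StrictMonoOn e (Iio δ.cof.ord) ∧
      e '' Iio δ.cof.ord = cofNeAleph0Closure C δ ∧
      ∀ i < δ.cof.ord, i.cof ≠ ℵ₀ → (e i).cof ≠ ℵ₀ := by
  obtain ⟨e, he, heD⟩ := (hC.isClubIn_cofNeAleph0Closure hδ hc hCc).exists_isNormal_image_eq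
    (isSuccLimit_of_aleph_one_le_cof hδ.le) hc (hC.cofNeAleph0Closure_subset.trans hCc)
  refine ⟨e, he.strictMono.strictMonoOn _, heD, fun i hi hicof => ?_⟩
  by_cases hlim : IsSuccLimit i
  · rwa [cof_map_of_isNormal he hlim]
  · have hAD : {x ∈ C | x.cof ≠ ℵ₀} ⊆ cofNeAleph0Closure C δ := fun x hx =>
      ⟨subset_closure hx, hC.1 x hx.1⟩
    have hAe := hAD.trans (heD.ge.trans (image_subset_range e _))
    have hei : e i ∈ cofNeAleph0Closure C δ := heD ▸ mem_image_of_mem e hi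
    exact (he.strictMono.mem_of_mem_closure_of_not_isSuccLimit hAe hei.1 hlim).2

end IsClubIn

theorem stmt6_general (θ lam : Cardinal.{0})
    (hθ : Cardinal.aleph 1 < θ)
    (C : Ordinal.{0} → Set Ordinal.{0})
    (hclub : ∀ δ, δ < lam.ord → Ordinal.cof δ = θ → IsClubIn (C δ) δ)
    (htype : ∀ δ, δ < lam.ord → Ordinal.cof δ = θ →
      ∃ e : Ordinal → Ordinal, StrictMonoOn e (Set.Iio θ.ord) ∧
        e '' Set.Iio θ.ord = C δ)
    (hguess : ∀ E : Set Ordinal, IsClubIn E lam.ord →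
      ∃ δ, δ < lam.ord ∧ Ordinal.cof δ = θ ∧ C δ ⊆ E) :
    ∃ D : Ordinal.{0} → Set Ordinal.{0},
      (∀ δ, δ < lam.ord → Ordinal.cof δ = θ → IsClubIn (D δ) δ) ∧
      (∀ E : Set Ordinal, IsClubIn E lam.ord →
        ∃ δ, δ < lam.ord ∧ Ordinal.cof δ = θ ∧ D δ ⊆ E) ∧
      ∀ δ, δ < lam.ord → Ordinal.cof δ = θ →
        ∃ e : Ordinal → Ordinal, StrictMonoOn e (Set.Iio θ.ord) ∧
          e '' Set.Iio θ.ord = D δ ∧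
          ∀ i < θ.ord, Ordinal.cof i ≠ Cardinal.aleph0 →
            Ordinal.cof (e i) ≠ Cardinal.aleph0 := by
  refine ⟨fun δ => cofNeAleph0Closure (C δ) δ, fun δ hδ hcof => ?_, fun E hE => ?_,
    fun δ hδ hcof => ?_⟩
  · obtain ⟨c, hc, hcC⟩ := htype δ hδ hcof
    subst hcof
    exact (hclub δ hδ rfl).isClubIn_cofNeAleph0Closure hθ hc hcC.ge
  · obtain ⟨δ, hδ, hcof, hCE⟩ := hguess E hE
    exact ⟨δ, hδ, hcof, (hclub δ hδ hcof).cofNeAleph0Closure_subset.trans hCE⟩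
  · obtain ⟨c, hc, hcC⟩ := htype δ hδ hcof
    subst hcof
    exact (hclub δ hδ rfl).exists_enum_cofNeAleph0Closure hθ hc hcC.ge

/-- Let `θ > ℵ₁` and `λ > θ` be regular cardinals, and suppose
`⟨C_δ : δ ∈ S^λ_θ⟩` is a club guessing sequence with each `C_δ` of order type
`θ`.  Then there is a club guessing sequence `⟨D_δ : δ ∈ S^λ_θ⟩` such that,
with `⟨α^δ_i : i < θ⟩` the increasing enumeration of `D_δ`, whenever `i < θ`
has uncountable cofinality then so does `α^δ_i`. -/
theorem stmt6 (θ lam : Cardinal.{0}) (hθreg : θ.IsRegular) (hlamreg : lam.IsRegular)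
    (hθ : Cardinal.aleph 1 < θ) (hθlam : θ < lam)
    (C : Ordinal.{0} → Set Ordinal.{0})
    (hclub : ∀ δ, δ < lam.ord → Ordinal.cof δ = θ → IsClubIn (C δ) δ)
    (htype : ∀ δ, δ < lam.ord → Ordinal.cof δ = θ →
      ∃ e : Ordinal → Ordinal, StrictMonoOn e (Set.Iio θ.ord) ∧
        e '' Set.Iio θ.ord = C δ)
    (hguess : ∀ E : Set Ordinal, IsClubIn E lam.ord →
      ∃ δ, δ < lam.ord ∧ Ordinal.cof δ = θ ∧ C δ ⊆ E) :
    ∃ D : Ordinal.{0} → Set Ordinal.{0},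
      (∀ δ, δ < lam.ord → Ordinal.cof δ = θ → IsClubIn (D δ) δ) ∧
      (∀ E : Set Ordinal, IsClubIn E lam.ord →
        ∃ δ, δ < lam.ord ∧ Ordinal.cof δ = θ ∧ D δ ⊆ E) ∧
      ∀ δ, δ < lam.ord → Ordinal.cof δ = θ →
        ∃ e : Ordinal → Ordinal, StrictMonoOn e (Set.Iio θ.ord) ∧
          e '' Set.Iio θ.ord = D δ ∧
          ∀ i < θ.ord, Ordinal.cof i ≠ Cardinal.aleph0 →
            Ordinal.cof (e i) ≠ Cardinal.aleph0 :=
  stmt6_general θ lam hθ C hclub htype hguess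
end

section
/- Let K consist of two disjoint convergent sequences x_n → x and y_n → y (x ≠ y, all points distinct) and let L consist of a single convergent sequence z_n → z. Define T : C(K) → C(L) by Tf(z₀) = f(y), Tf(z_{2n-1}) = (f(x_n)+f(y))/2 for n ≥ 1, Tf(z_{2n+2}) = (f(x)+f(y_n))/2 for n ≥ 0 (with Tf(z) = (f(x)+f(y))/2). Then T is a well-defined positive linear bijection from C(K) onto C(L), and its inverse S is given by Sh(y) = h(z₀), Sh(x) = 2h(z) − h(z₀), Sh(x_n) = 2h(z_{2n-1}) − h(z₀), Sh(y_n) = 2h(z_{2n}) − 2h(z) + h(z₀) for n ≥ 1. -/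
open OnePoint Filter Topology

noncomputable section PlebanekAux

/-- The sequence part of `T f`. -/
def tA (f : C(Fin 2 × OnePoint ℕ, ℝ)) (n : ℕ) : ℝ :=
  if n = 0 then f ((1 : Fin 2), (∞ : OnePoint ℕ))
  else if n % 2 = 1 then
    (f ((0 : Fin 2), ((n / 2 : ℕ) : OnePoint ℕ)) + f ((1 : Fin 2), (∞ : OnePoint ℕ))) / 2
  else
    (f ((0 : Fin 2), (∞ : OnePoint ℕ)) + f ((1 : Fin 2), (((n - 2) / 2 : ℕ) : OnePoint ℕ))) / 2

lemma dist_half (a b c : ℝ) : dist ((a + c) / 2) ((b + c) / 2) = dist a b / 2 := by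
  have h : (a + c) / 2 - (b + c) / 2 = (a - b) / 2 := by ring
  rw [Real.dist_eq, Real.dist_eq, h, abs_div, abs_two]

lemma dist_half' (a b c : ℝ) : dist ((c + a) / 2) ((c + b) / 2) = dist a b / 2 := by
  have h : (c + a) / 2 - (c + b) / 2 = (a - b) / 2 := by ring
  rw [Real.dist_eq, Real.dist_eq, h, abs_div, abs_two]

lemma tA_tendsto (f : C(Fin 2 × OnePoint ℕ, ℝ)) :
    Tendsto (tA f) atTop
      (𝓝 ((f ((0 : Fin 2), (∞ : OnePoint ℕ)) + f ((1 : Fin 2), (∞ : OnePoint ℕ))) / 2)) := by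
  have hx : Tendsto (fun n : ℕ => f ((0 : Fin 2), (n : OnePoint ℕ))) atTop
      (𝓝 (f ((0 : Fin 2), (∞ : OnePoint ℕ)))) := by
    have hc : Continuous fun p : OnePoint ℕ => f ((0 : Fin 2), p) :=
      f.continuous.comp (continuous_const.prodMk continuous_id)
    exact (continuous_iff_from_nat _).mp hc
  have hy : Tendsto (fun n : ℕ => f ((1 : Fin 2), (n : OnePoint ℕ))) atTop
      (𝓝 (f ((1 : Fin 2), (∞ : OnePoint ℕ)))) := by
    have hc : Continuous fun p : OnePoint ℕ => f ((1 : Fin 2), p) :=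
      f.continuous.comp (continuous_const.prodMk continuous_id)
    exact (continuous_iff_from_nat _).mp hc
  rw [Metric.tendsto_atTop] at hx hy ⊢
  intro ε hε
  obtain ⟨N₁, hN₁⟩ := hx ε hε
  obtain ⟨N₂, hN₂⟩ := hy ε hε
  refine ⟨2 * N₁ + 2 * N₂ + 3, fun n hn => ?_⟩
  unfold tA
  rw [if_neg (by omega)]
  by_cases hpar : n % 2 = 1
  · rw [if_pos hpar, dist_half]
    have := hN₁ (n / 2) (by omega)
    linarith
  · rw [if_neg hpar, dist_half']
    have := hN₂ ((n - 2) / 2) (by omega)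
    linarith

/-- The forward map `T`. -/
def Tmap (f : C(Fin 2 × OnePoint ℕ, ℝ)) : C(OnePoint ℕ, ℝ) :=
  OnePoint.continuousMapMkNat (tA f)
    ((f ((0 : Fin 2), (∞ : OnePoint ℕ)) + f ((1 : Fin 2), (∞ : OnePoint ℕ))) / 2)
    (tA_tendsto f)

@[simp] lemma Tmap_coe (f : C(Fin 2 × OnePoint ℕ, ℝ)) (n : ℕ) :
    Tmap f (n : OnePoint ℕ) = tA f n := rfl

@[simp] lemma Tmap_infty (f : C(Fin 2 × OnePoint ℕ, ℝ)) :
    Tmap f (∞ : OnePoint ℕ) =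
      (f ((0 : Fin 2), (∞ : OnePoint ℕ)) + f ((1 : Fin 2), (∞ : OnePoint ℕ))) / 2 := rfl

lemma tA_zero (f : C(Fin 2 × OnePoint ℕ, ℝ)) :
    tA f 0 = f ((1 : Fin 2), (∞ : OnePoint ℕ)) := by simp [tA]

lemma tA_odd (f : C(Fin 2 × OnePoint ℕ, ℝ)) (n : ℕ) :
    tA f (2 * n + 1) =
      (f ((0 : Fin 2), ((n : ℕ) : OnePoint ℕ)) + f ((1 : Fin 2), (∞ : OnePoint ℕ))) / 2 := by
  unfold tA
  rw [if_neg (by omega), if_pos (by omega)]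
  have h : (2 * n + 1) / 2 = n := by omega
  rw [h]

lemma tA_even (f : C(Fin 2 × OnePoint ℕ, ℝ)) (n : ℕ) :
    tA f (2 * n + 2) =
      (f ((0 : Fin 2), (∞ : OnePoint ℕ)) + f ((1 : Fin 2), ((n : ℕ) : OnePoint ℕ))) / 2 := by
  unfold tA
  rw [if_neg (by omega), if_neg (by omega)]
  have h : (2 * n + 2 - 2) / 2 = n := by omega
  rw [h]

lemma hh_tendsto (h : C(OnePoint ℕ, ℝ)) :
    Tendsto (fun n : ℕ => h (n : OnePoint ℕ)) atTop (𝓝 (h (∞ : OnePoint ℕ))) :=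
  (continuous_iff_from_nat _).mp h.continuous

/-- The first row of `S h`. -/
def sA (h : C(OnePoint ℕ, ℝ)) : C(OnePoint ℕ, ℝ) :=
  OnePoint.continuousMapMkNat
    (fun n => 2 * h ((2 * n + 1 : ℕ) : OnePoint ℕ) - h ((0 : ℕ) : OnePoint ℕ))
    (2 * h (∞ : OnePoint ℕ) - h ((0 : ℕ) : OnePoint ℕ))
    (by
      have hm : Tendsto (fun n : ℕ => 2 * n + 1) atTop atTop :=
        StrictMono.tendsto_atTop (fun a b hab => by omega)
      have := ((hh_tendsto h).comp hm).const_mul 2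
      exact this.sub_const _)

/-- The second row of `S h`. -/
def sB (h : C(OnePoint ℕ, ℝ)) : C(OnePoint ℕ, ℝ) :=
  OnePoint.continuousMapMkNat
    (fun n => 2 * h ((2 * n + 2 : ℕ) : OnePoint ℕ) - 2 * h (∞ : OnePoint ℕ) +
      h ((0 : ℕ) : OnePoint ℕ))
    (h ((0 : ℕ) : OnePoint ℕ))
    (by
      have hm : Tendsto (fun n : ℕ => 2 * n + 2) atTop atTop :=
        StrictMono.tendsto_atTop (fun a b hab => by omega)
      have h1 := (((hh_tendsto h).comp hm).const_mul 2).sub_const (2 * h (∞ : OnePoint ℕ))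
      have h2 := h1.add_const (h ((0 : ℕ) : OnePoint ℕ))
      have : (2 : ℝ) * h (∞ : OnePoint ℕ) - 2 * h (∞ : OnePoint ℕ) +
          h ((0 : ℕ) : OnePoint ℕ) = h ((0 : ℕ) : OnePoint ℕ) := by ring
      rw [this] at h2
      exact h2)

@[simp] lemma sA_coe (h : C(OnePoint ℕ, ℝ)) (n : ℕ) :
    sA h (n : OnePoint ℕ) =
      2 * h ((2 * n + 1 : ℕ) : OnePoint ℕ) - h ((0 : ℕ) : OnePoint ℕ) := rfl

@[simp] lemma sA_infty (h : C(OnePoint ℕ, ℝ)) :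
    sA h (∞ : OnePoint ℕ) = 2 * h (∞ : OnePoint ℕ) - h ((0 : ℕ) : OnePoint ℕ) := rfl

@[simp] lemma sB_coe (h : C(OnePoint ℕ, ℝ)) (n : ℕ) :
    sB h (n : OnePoint ℕ) =
      2 * h ((2 * n + 2 : ℕ) : OnePoint ℕ) - 2 * h (∞ : OnePoint ℕ) +
        h ((0 : ℕ) : OnePoint ℕ) := rfl

@[simp] lemma sB_infty (h : C(OnePoint ℕ, ℝ)) :
    sB h (∞ : OnePoint ℕ) = h ((0 : ℕ) : OnePoint ℕ) := rfl

/-- The inverse map `S`. -/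
def Smap (h : C(OnePoint ℕ, ℝ)) : C(Fin 2 × OnePoint ℕ, ℝ) where
  toFun := fun q => (if q.1 = 0 then (1 : ℝ) else 0) * sA h q.2 +
    (if q.1 = 0 then (0 : ℝ) else 1) * sB h q.2
  continuous_toFun := by
    refine Continuous.add (Continuous.mul ?_ ((sA h).continuous.comp continuous_snd))
      (Continuous.mul ?_ ((sB h).continuous.comp continuous_snd))
    · exact (continuous_of_discreteTopology
        (f := fun i : Fin 2 => if i = 0 then (1 : ℝ) else 0)).comp continuous_fst
    · exact (continuous_of_discreteTopology
        (f := fun i : Fin 2 => if i = 0 then (0 : ℝ) else 1)).comp continuous_fst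

@[simp] lemma Smap_zero (h : C(OnePoint ℕ, ℝ)) (p : OnePoint ℕ) :
    Smap h ((0 : Fin 2), p) = sA h p := by
  simp [Smap]

@[simp] lemma Smap_one (h : C(OnePoint ℕ, ℝ)) (p : OnePoint ℕ) :
    Smap h ((1 : Fin 2), p) = sB h p := by
  simp [Smap]

lemma tA_add (f g : C(Fin 2 × OnePoint ℕ, ℝ)) (n : ℕ) :
    tA (f + g) n = tA f n + tA g n := by
  unfold tA; split_ifs <;> simp <;> ring

lemma tA_smul (c : ℝ) (f : C(Fin 2 × OnePoint ℕ, ℝ)) (n : ℕ) :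
    tA (c • f) n = c * tA f n := by
  unfold tA; split_ifs <;> simp <;> ring

/-- `T` as a linear map. -/
def TL : C(Fin 2 × OnePoint ℕ, ℝ) →ₗ[ℝ] C(OnePoint ℕ, ℝ) where
  toFun := Tmap
  map_add' f g := by
    ext p
    induction p using OnePoint.rec with
    | infty => simp; ring
    | coe n => simp [tA_add]
  map_smul' c f := by
    ext p
    induction p using OnePoint.rec with
    | infty => simp; ring
    | coe n => simp [tA_smul]

/-- `S` as a linear map. -/
def SL : C(OnePoint ℕ, ℝ) →ₗ[ℝ] C(Fin 2 × OnePoint ℕ, ℝ) where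
  toFun := Smap
  map_add' f g := by
    ext ⟨i, p⟩
    fin_cases i <;> induction p using OnePoint.rec <;> simp <;> ring
  map_smul' c f := by
    ext ⟨i, p⟩
    fin_cases i <;> induction p using OnePoint.rec <;> simp <;> ring

lemma SL_TL (f : C(Fin 2 × OnePoint ℕ, ℝ)) : SL (TL f) = f := by
  show Smap (Tmap f) = f
  ext ⟨i, p⟩
  fin_cases i <;> induction p using OnePoint.rec <;>
    simp [tA_odd, tA_zero, tA_even] <;> try ring

lemma TL_SL (h : C(OnePoint ℕ, ℝ)) : TL (SL h) = h := by
  show Tmap (Smap h) = h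
  ext p
  induction p using OnePoint.rec with
  | infty => simp
  | coe n =>
    rw [Tmap_coe]
    unfold tA
    by_cases h0 : n = 0
    · subst h0; simp
    · rw [if_neg h0]
      by_cases hpar : n % 2 = 1
      · rw [if_pos hpar]
        have hn : 2 * (n / 2) + 1 = n := by omega
        simp only [Smap_zero, Smap_one, sA_coe, sB_infty, hn]
        ring
      · rw [if_neg hpar]
        have hn : 2 * ((n - 2) / 2) + 2 = n := by omega
        simp only [Smap_zero, Smap_one, sA_infty, sB_coe, hn]
        ring

end PlebanekAux

/- `K` is the space of two disjoint convergent sequences: `x_n` is coded as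
`((0 : Fin 2), n)`, `x = ((0 : Fin 2), ∞)`, `y_n = ((1 : Fin 2), n)`,
`y = ((1 : Fin 2), ∞)`.  `L = OnePoint ℕ` is a single convergent sequence
`z_n = n`, `z = ∞`.  Plebanek's map `T` is a well-defined positive linear
bijection of `C(K)` onto `C(L)` with the stated inverse `S`. -/
theorem stmt11 :
    ∃ T : C(Fin 2 × OnePoint ℕ, ℝ) ≃ₗ[ℝ] C(OnePoint ℕ, ℝ),
      (∀ f : C(Fin 2 × OnePoint ℕ, ℝ),
        -- Tf(z₀) = f(y)
        T f ((0 : ℕ) : OnePoint ℕ) = f ((1 : Fin 2), (∞ : OnePoint ℕ)) ∧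
        -- Tf(z_{2n-1}) = (f(xₙ) + f(y))/2  (odd indices)
        (∀ n : ℕ, T f ((2 * n + 1 : ℕ) : OnePoint ℕ) =
          (f ((0 : Fin 2), ((n : ℕ) : OnePoint ℕ)) +
            f ((1 : Fin 2), (∞ : OnePoint ℕ))) / 2) ∧
        -- Tf(z_{2n+2}) = (f(x) + f(yₙ))/2  (even indices ≥ 2)
        (∀ n : ℕ, T f ((2 * n + 2 : ℕ) : OnePoint ℕ) =
          (f ((0 : Fin 2), (∞ : OnePoint ℕ)) +
            f ((1 : Fin 2), ((n : ℕ) : OnePoint ℕ))) / 2) ∧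
        -- Tf(z) = (f(x) + f(y))/2
        T f (∞ : OnePoint ℕ) =
          (f ((0 : Fin 2), (∞ : OnePoint ℕ)) +
            f ((1 : Fin 2), (∞ : OnePoint ℕ))) / 2) ∧
      -- positivity
      (∀ f : C(Fin 2 × OnePoint ℕ, ℝ), 0 ≤ f → 0 ≤ T f) ∧
      -- the inverse S
      (∀ h : C(OnePoint ℕ, ℝ),
        T.symm h ((1 : Fin 2), (∞ : OnePoint ℕ)) = h ((0 : ℕ) : OnePoint ℕ) ∧
        T.symm h ((0 : Fin 2), (∞ : OnePoint ℕ)) =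
          2 * h (∞ : OnePoint ℕ) - h ((0 : ℕ) : OnePoint ℕ) ∧
        (∀ n : ℕ, T.symm h ((0 : Fin 2), ((n : ℕ) : OnePoint ℕ)) =
          2 * h ((2 * n + 1 : ℕ) : OnePoint ℕ) - h ((0 : ℕ) : OnePoint ℕ)) ∧
        (∀ n : ℕ, T.symm h ((1 : Fin 2), ((n : ℕ) : OnePoint ℕ)) =
          2 * h ((2 * n + 2 : ℕ) : OnePoint ℕ) - 2 * h (∞ : OnePoint ℕ) +
            h ((0 : ℕ) : OnePoint ℕ))) := by
  refine ⟨LinearEquiv.ofLinear TL SL (LinearMap.ext TL_SL) (LinearMap.ext SL_TL), ?_, ?_, ?_⟩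
  · intro f
    refine ⟨?_, fun n => ?_, fun n => ?_, ?_⟩
    · show Tmap f _ = _
      rw [show ((0 : ℕ) : OnePoint ℕ) = ((0 : ℕ) : OnePoint ℕ) from rfl, Tmap_coe, tA_zero]
    · show Tmap f _ = _
      rw [Tmap_coe, tA_odd]
    · show Tmap f _ = _
      rw [Tmap_coe, tA_even]
    · show Tmap f _ = _
      rw [Tmap_infty]
  · intro f hf
    have hf' : ∀ q, 0 ≤ f q := fun q => by
      simpa using ContinuousMap.le_def.mp hf q
    rw [ContinuousMap.le_def]
    intro p
    simp only [ContinuousMap.zero_apply]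
    show (0 : ℝ) ≤ Tmap f p
    induction p using OnePoint.rec with
    | infty =>
      rw [Tmap_infty]
      have := hf' ((0 : Fin 2), (∞ : OnePoint ℕ))
      have := hf' ((1 : Fin 2), (∞ : OnePoint ℕ))
      linarith
    | coe n =>
      rw [Tmap_coe]
      unfold tA
      split_ifs
      · exact hf' _
      · have := hf' ((0 : Fin 2), (((n : ℕ) / 2 : ℕ) : OnePoint ℕ))
        have := hf' ((1 : Fin 2), (∞ : OnePoint ℕ))
        linarith
      · have := hf' ((0 : Fin 2), (∞ : OnePoint ℕ))
        have := hf' ((1 : Fin 2), (((n - 2) / 2 : ℕ) : OnePoint ℕ))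
        linarith
  · intro h
    refine ⟨?_, ?_, fun n => ?_, fun n => ?_⟩
    · show Smap h _ = _
      rw [Smap_one, sB_infty]
    · show Smap h _ = _
      rw [Smap_zero, sA_infty]
    · show Smap h _ = _
      rw [Smap_zero, sA_coe]
    · show Smap h _ = _
      rw [Smap_one, sB_coe]
end
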